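/- In the graph G constructed in the warm-up reduction from a DVD instance H with all indegrees at most 2, every interesting path p = v₁…v_k consists entirely of red vertices, has exactly k = L+1 vertices, and its non-final vertices v₁,…,v_{L} all lie in V_H and form a path of L vertices in H. -/

import Mathlib

/-- Colors of vertices in the circuit DAG. -/
inductive Color where
  | white | blue | red
deriving DecidableEq

/-- Number of red vertices on a path (given as a list of vertices). -/
def redCount {V : Type*} (color : V → Color) (p : List V) : ℕ :=
  (p.filter (fun v => decide (color v = Color.red))).length

/-- `p` is an interesting path: it starts and ends at red vertices and traverses exactly
`L+1` red vertices. -/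
def IntPath {V : Type*} (E : V → V → Prop) (color : V → Color) (L : ℕ) (p : List V) : Prop :=
  ∃ hp : p ≠ [], p.Chain' E ∧ color (p.head hp) = Color.red ∧
    color (p.getLast hp) = Color.red ∧ redCount color p = L + 1

variable {α : Type*} [Fintype α] [DecidableEq α]

/-- Vertex set of the warm-up reduction graph `G`: the original vertices `V_H` (`.inl v`),
their clones `V_H'` (`.inr (.inl v)`), and the white source `s₀` (`.inr (.inr ())`). -/
abbrev WV (α : Type*) := α ⊕ (α ⊕ Unit)

/-- Colors in the reduction graph: original vertices and clones are red, `s₀` is white. -/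
def wcolor : WV α → Color
  | .inl _ => Color.red
  | .inr (.inl _) => Color.red
  | .inr (.inr _) => Color.white

/-- Indegree of a vertex of `H`. -/
def windeg (EH : α → α → Prop) [DecidableRel EH] (v : α) : ℕ :=
  (Finset.univ.filter (fun u => EH u v)).card

/-- Edges of the warm-up reduction graph `G`: the edges of `H`, an edge from each `v` to its
clone `v'`, and an edge from `s₀` to each `v` of indegree at most 1 (so that `v` gets
`2 − indegree_H(v)` parallel copies in the multigraph; parallel multiplicities are
irrelevant for paths). -/
def WE (EH : α → α → Prop) [DecidableRel EH] : WV α → WV α → Prop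
  | .inl u, .inl v => EH u v
  | .inl u, .inr (.inl v) => u = v
  | .inr (.inr _), .inl v => windeg EH v ≤ 1
  | _, _ => False

/-! Every edge of `G` ends at a red vertex, so a path starting at a red vertex is entirely red
and its length is its red count. A red vertex with an outgoing edge lies in `V_H` (clones are
sinks), so every non-final vertex of the path lies in `V_H`, and the edges between them are
edges of `H`. -/

theorem List.IsChain.exists_rel_of_mem_dropLast {β : Type*} {R : β → β → Prop} {l : List β}
    (h : l.IsChain R) {x : β} (hx : x ∈ l.dropLast) : ∃ y, R x y := by
  induction l using List.twoStepInduction with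
  | nil | singleton => simp at hx
  | cons_cons a b t _ ih =>
    rw [List.dropLast_cons_cons, List.mem_cons] at hx
    rcases hx with rfl | hx
    · exact ⟨b, (List.isChain_cons_cons.mp h).1⟩
    · exact ih b h.tail hx

theorem redCount_eq_length {V : Type*} {color : V → Color} {p : List V}
    (hred : ∀ z ∈ p, color z = Color.red) : redCount color p = p.length := by
  rw [redCount, List.filter_eq_self.mpr (by simpa using hred)]

section Reduction

variable {V : Type*} [Fintype V] {EH : V → V → Prop} [DecidableRel EH] {a b : WV V}

theorem WE.wcolor_right (h : WE EH a b) : wcolor b = Color.red := by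
  rcases b with v | v | v <;> rcases a with u | u | u <;> simp_all [WE, wcolor]

theorem WE.mem_range_inl_of_wcolor_left (h : WE EH a b) (ha : wcolor a = Color.red) :
    a ∈ Set.range Sum.inl := by
  rcases a with u | u | u
  · exact ⟨u, rfl⟩
  · rcases b with v | v | v <;> exact h.elim
  · simp [wcolor] at ha

theorem IntPath.forall_wcolor_eq_red {L : ℕ} {p : List (WV V)}
    (hp : IntPath (WE EH) wcolor L p) : ∀ z ∈ p, wcolor z = Color.red := by
  obtain ⟨_, hch, hhead, -⟩ := hp
  exact hch.induction _ _ (fun _ _ h _ => h.wcolor_right) (fun _ => hhead)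

theorem exists_isChain_map_inl_eq_dropLast {p : List (WV V)} (hch : p.IsChain (WE EH))
    (hred : ∀ z ∈ p, wcolor z = Color.red) :
    ∃ q : List V, q.IsChain EH ∧ p.dropLast = q.map Sum.inl := by
  have hinl : p.dropLast ∈ Set.range (List.map Sum.inl) := by
    rw [Set.range_list_map]
    intro z hz
    obtain ⟨_, hzy⟩ := hch.exists_rel_of_mem_dropLast hz
    exact hzy.mem_range_inl_of_wcolor_left (hred z (List.dropLast_subset _ hz))
  obtain ⟨q, hq⟩ := hinl
  refine ⟨q, ?_, hq.symm⟩
  exact (List.isChain_map Sum.inl).mp (hq ▸ hch.dropLast)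

end Reduction

theorem stmt12_general (EH : α → α → Prop) [DecidableRel EH]
    (L : ℕ)
    (p : List (WV α)) (hp : IntPath (WE EH) wcolor L p) :
    (∀ z ∈ p, wcolor z = Color.red) ∧ p.length = L + 1 ∧
    ∃ q : List α, q.Chain' EH ∧ q.length = L ∧ p.dropLast = q.map Sum.inl := by
  have hred := hp.forall_wcolor_eq_red
  obtain ⟨-, hch, -, -, hcount⟩ := hp
  have hlen : p.length = L + 1 := redCount_eq_length hred ▸ hcount
  obtain ⟨q, hq, hdrop⟩ := exists_isChain_map_inl_eq_dropLast hch hred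
  refine ⟨hred, hlen, q, hq, ?_, hdrop⟩
  simpa [hlen] using (congrArg List.length hdrop).symm

/-- in the warm-up reduction graph `G` built from a DAG `H` with all indegrees
at most 2, every interesting path `p` consists entirely of red vertices, has exactly `L+1`
vertices, and its non-final vertices all lie in `V_H` and form a path of `L` vertices in `H`. -/
theorem stmt12 (EH : α → α → Prop) [DecidableRel EH]
    (hdag : WellFounded EH) (L : ℕ) (hL : 2 ≤ L)
    (hdeg : ∀ v : α, windeg EH v ≤ 2)
    (p : List (WV α)) (hp : IntPath (WE EH) wcolor L p) :
    (∀ z ∈ p, wcolor z = Color.red) ∧ p.length = L + 1 ∧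
    ∃ q : List α, q.Chain' EH ∧ q.length = L ∧ p.dropLast = q.map Sum.inl :=
  stmt12_general EH L p hp
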